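/- For all α, β ∈ ℂ and φ ∈ ℝ, the maximally entangled super-coherent states at θ = π satisfy ⟨|β,π,φ⟩_{L±}, |α,π,φ⟩_{L±}⟩ = (1 − |α − β|²/2) · e^{−|α|²/2 − |β|²/2 + conj(β)·α}. In particular, these two states are orthogonal if and only if |α − β|² = 2; hence for each α the set of parameters β giving states orthogonal to |α,π,φ⟩_{L±} is exactly the circle { α + √2·e^{it} : t ∈ ℝ } in ℂ. -/

import Mathlib

open scoped InnerProductSpace ComplexConjugate

noncomputable section

/-- The Hilbert space `ℓ²(ℕ, ℂ)` of square-summable complex sequences. -/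
abbrev H : Type := lp (fun _ : ℕ => ℂ) 2

/-- The componentwise-sum inner product on fermion–boson states in `H × H`. -/
noncomputable def pinner (Φ Ψ : H × H) : ℂ := ⟪Φ.1, Ψ.1⟫_ℂ + ⟪Φ.2, Ψ.2⟫_ℂ

/-- The displaced Fock state `ψ0^α = D(α)|0⟩` as a coefficient sequence. -/
noncomputable def psi0 (α : ℂ) : ℕ → ℂ := fun n =>
  Complex.exp (-(‖α‖ ^ 2 : ℝ) / 2) * α ^ n / Real.sqrt n.factorial

/-- The displaced Fock state `ψ1^α = D(α)|1⟩` as a coefficient sequence. -/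
noncomputable def psi1 (α : ℂ) : ℕ → ℂ := fun n =>
  if n = 0 then -conj α * Complex.exp (-(‖α‖ ^ 2 : ℝ) / 2)
  else Complex.exp (-(‖α‖ ^ 2 : ℝ) / 2) * α ^ (n - 1) * ((n : ℂ) - (‖α‖ ^ 2 : ℝ)) /
    Real.sqrt n.factorial

/-- The super-coherent state `|α,θ,φ⟩_{L_ε}` (sign `ε = ±1`) as an element of `H × H`,
given square-summability witnesses for the displaced Fock states. -/
noncomputable def scL (θ φ : ℝ) (ε α : ℂ)
    (h0 : Memℓp (psi0 α) 2) (h1 : Memℓp (psi1 α) 2) : H × H :=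
  ((Real.cos (θ / 2) : ℂ) • (⟨psi0 α, h0⟩ : H) +
      ((Real.sin (θ / 2) : ℂ) * Complex.exp (φ * Complex.I) / Real.sqrt 2) •
        (⟨psi1 α, h1⟩ : H),
    (ε * ((Real.sin (θ / 2) : ℂ) * Complex.exp (φ * Complex.I) / Real.sqrt 2)) •
      (⟨psi0 α, h0⟩ : H))

/-! ### Auxiliary lemmas -/

lemma normsq_cast (γ : ℂ) : ((‖γ‖ ^ 2 : ℝ) : ℂ) = γ * conj γ := by
  rw [Complex.sq_norm, Complex.mul_conj]

lemma expHasSum (z : ℂ) : HasSum (fun n : ℕ => z ^ n / n.factorial) (Complex.exp z) := by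
  rw [Complex.exp_eq_exp_ℂ, NormedSpace.exp_eq_tsum_div]
  exact (NormedSpace.expSeries_div_summable z).hasSum

lemma hasSum_shift {f : ℕ → ℂ} {a : ℂ} (h : HasSum (fun n => f (n + 1)) (a - f 0)) :
    HasSum f a := by
  have := (hasSum_nat_add_iff (f := f) 1).mp h
  simpa using this

lemma fact_cast (n : ℕ) : (((n + 1).factorial : ℕ) : ℂ) = ((n : ℂ) + 1) * n.factorial := by
  push_cast [Nat.factorial_succ]; ring

lemma hasSum_n (z : ℂ) :
    HasSum (fun n : ℕ => (n : ℂ) * z ^ n / n.factorial) (z * Complex.exp z) := by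
  apply hasSum_shift
  simp only [Nat.cast_zero, zero_mul, zero_div, sub_zero]
  have h := (expHasSum z).mul_left z
  convert h using 1
  · rfl
  funext n
  rw [fact_cast]
  have hn : ((n : ℂ) + 1) ≠ 0 := Nat.cast_add_one_ne_zero n
  have hf : ((n.factorial : ℕ) : ℂ) ≠ 0 := Nat.cast_ne_zero.mpr n.factorial_ne_zero
  field_simp
  push_cast
  ring

lemma hasSum_shiftdiv (z : ℂ) :
    HasSum (fun n : ℕ => z ^ (n + 1) / (n + 1).factorial) (Complex.exp z - 1) := by
  refine (hasSum_nat_add_iff (f := fun n : ℕ => z ^ n / n.factorial) 1).mpr ?_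
  simpa using expHasSum z

lemma hasSum_main (z a b : ℂ) (hab : a * b = z * conj z) :
    HasSum (fun n : ℕ => if n = 0 then conj z
        else z ^ (n - 1) * ((n : ℂ) - b) * ((n : ℂ) - a) / n.factorial)
      ((1 + z + conj z - a - b) * Complex.exp z) := by
  apply hasSum_shift
  have h1 : HasSum (fun n : ℕ => ((n : ℂ) * z ^ n / n.factorial + z ^ n / n.factorial)
        + (-(a + b)) * (z ^ n / n.factorial) + conj z * (z ^ (n + 1) / (n + 1).factorial))
      ((z * Complex.exp z + Complex.exp z) + (-(a + b)) * Complex.exp z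
        + conj z * (Complex.exp z - 1)) := by
    exact (((hasSum_n z).add (expHasSum z)).add ((expHasSum z).mul_left _)).add
      ((hasSum_shiftdiv z).mul_left _)
  convert h1 using 1
  · funext n
    simp only [Nat.succ_ne_zero, if_false, Nat.add_sub_cancel]
    rw [fact_cast]
    have hn : ((n : ℂ) + 1) ≠ 0 := Nat.cast_add_one_ne_zero n
    have hf : ((n.factorial : ℕ) : ℂ) ≠ 0 := Nat.cast_ne_zero.mpr n.factorial_ne_zero
    push_cast
    field_simp
    linear_combination z ^ n * hab
  · simp only [if_pos]
    ring

lemma sqrt_fact_mul (n : ℕ) :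
    (Real.sqrt n.factorial : ℂ) * (Real.sqrt n.factorial : ℂ) = ((n.factorial : ℕ) : ℂ) := by
  rw [← Complex.ofReal_mul, Real.mul_self_sqrt (by positivity)]
  norm_cast

lemma sqrt_fact_ne (n : ℕ) : (Real.sqrt n.factorial : ℂ) ≠ 0 := by
  have : (0 : ℝ) < Real.sqrt n.factorial := Real.sqrt_pos.mpr (by positivity)
  exact_mod_cast this.ne'

lemma inner0 (α β : ℂ) (h0a : Memℓp (psi0 α) 2) (h0b : Memℓp (psi0 β) 2) :
    ⟪(⟨psi0 β, h0b⟩ : H), (⟨psi0 α, h0a⟩ : H)⟫_ℂ =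
      Complex.exp (-(‖α‖ ^ 2 : ℝ) / 2 + -(‖β‖ ^ 2 : ℝ) / 2 + conj β * α) := by
  refine (lp.hasSum_inner _ _).unique ?_
  have key : (fun n : ℕ => ⟪((⟨psi0 β, h0b⟩ : H) : ∀ _ : ℕ, ℂ) n,
        ((⟨psi0 α, h0a⟩ : H) : ∀ _ : ℕ, ℂ) n⟫_ℂ)
      = fun n : ℕ => (Complex.exp (-(‖β‖ ^ 2 : ℝ) / 2) * Complex.exp (-(‖α‖ ^ 2 : ℝ) / 2)) *
          ((conj β * α) ^ n / n.factorial) := by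
    funext n
    show psi0 α n * conj (psi0 β n) = _
    unfold psi0
    rw [← sqrt_fact_mul n]
    have := sqrt_fact_ne n
    simp only [map_div₀, map_mul, map_pow, ← Complex.exp_conj, map_neg, Complex.conj_ofReal,
      map_ofNat]
    ring
  rw [key]
  have h := (expHasSum (conj β * α)).mul_left
    (Complex.exp (-(‖β‖ ^ 2 : ℝ) / 2) * Complex.exp (-(‖α‖ ^ 2 : ℝ) / 2))
  convert h using 1
  · rfl
  rw [← Complex.exp_add, ← Complex.exp_add]
  ring_nf

lemma inner1 (α β : ℂ) (h1a : Memℓp (psi1 α) 2) (h1b : Memℓp (psi1 β) 2) :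
    ⟪(⟨psi1 β, h1b⟩ : H), (⟨psi1 α, h1a⟩ : H)⟫_ℂ =
      (1 + conj β * α + β * conj α - α * conj α - β * conj β) *
        Complex.exp (-(‖α‖ ^ 2 : ℝ) / 2 + -(‖β‖ ^ 2 : ℝ) / 2 + conj β * α) := by
  refine (lp.hasSum_inner _ _).unique ?_
  set z : ℂ := conj β * α with hz
  have hab : ((‖α‖ ^ 2 : ℝ) : ℂ) * ((‖β‖ ^ 2 : ℝ) : ℂ) = z * conj z := by
    rw [normsq_cast, normsq_cast, hz, map_mul, Complex.conj_conj]
    ring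
  have H0 := (hasSum_main z ((‖α‖ ^ 2 : ℝ) : ℂ) ((‖β‖ ^ 2 : ℝ) : ℂ) hab).mul_left
    (Complex.exp (-(‖β‖ ^ 2 : ℝ) / 2) * Complex.exp (-(‖α‖ ^ 2 : ℝ) / 2))
  convert H0 using 1
  · rfl
  · funext n
    show psi1 α n * conj (psi1 β n) = _
    unfold psi1
    rcases n with _ | n
    · simp only [if_pos, map_mul, map_neg, Complex.conj_conj, ← Complex.exp_conj,
        map_div₀, Complex.conj_ofReal, map_ofNat]
      rw [hz, map_mul, Complex.conj_conj]
      ring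
    · simp only [Nat.succ_ne_zero, if_false, Nat.add_sub_cancel]
      rw [← sqrt_fact_mul (n + 1)]
      have := sqrt_fact_ne (n + 1)
      simp only [map_div₀, map_mul, map_pow, map_sub, ← Complex.exp_conj, map_neg,
        Complex.conj_ofReal, map_natCast, map_ofNat]
      push_cast
      ring
  · rw [Complex.exp_add, Complex.exp_add, hz, map_mul, Complex.conj_conj,
      normsq_cast α, normsq_cast β]
    ring

/-- For `θ = π` (the maximally entangled Bell super-coherent states):
`⟨|β,π,φ⟩, |α,π,φ⟩⟩ = (1 − |α−β|²/2)·e^{−|α|²/2−|β|²/2+conj(β)·α}`; consequently the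
two states are orthogonal iff `|α − β|² = 2`, i.e. the set of parameters `β` giving
states orthogonal to `|α,π,φ⟩` is exactly the circle `{α + √2·e^{it} : t ∈ ℝ}`. -/
theorem bell_supercoherent_orthogonality (φ : ℝ) (ε : ℂ) (hε : ε = 1 ∨ ε = -1) (α : ℂ)
    (hm0 : ∀ γ : ℂ, Memℓp (psi0 γ) 2) (hm1 : ∀ γ : ℂ, Memℓp (psi1 γ) 2) :
    (∀ β : ℂ,
      pinner (scL Real.pi φ ε β (hm0 β) (hm1 β)) (scL Real.pi φ ε α (hm0 α) (hm1 α)) =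
        (1 - ((‖α - β‖ ^ 2 / 2 : ℝ) : ℂ)) *
          Complex.exp ((-(‖α‖ ^ 2 : ℝ) / 2 : ℝ) + (-(‖β‖ ^ 2 : ℝ) / 2 : ℝ) + conj β * α)) ∧
    (∀ β : ℂ,
      (pinner (scL Real.pi φ ε β (hm0 β) (hm1 β))
          (scL Real.pi φ ε α (hm0 α) (hm1 α)) = 0 ↔ ‖α - β‖ ^ 2 = 2)) ∧
    {β : ℂ |
        pinner (scL Real.pi φ ε β (hm0 β) (hm1 β))
          (scL Real.pi φ ε α (hm0 α) (hm1 α)) = 0} =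
      {β : ℂ | ∃ t : ℝ, β = α + (Real.sqrt 2 : ℂ) * Complex.exp (t * Complex.I)} := by
  have hee : conj ε * ε = 1 := by rcases hε with h | h <;> simp [h]
  have hcc : conj (Complex.exp (φ * Complex.I) / (Real.sqrt 2 : ℂ)) *
      (Complex.exp (φ * Complex.I) / (Real.sqrt 2 : ℂ)) = 1 / 2 := by
    rw [map_div₀, ← Complex.exp_conj, map_mul, Complex.conj_ofReal, Complex.conj_I,
      Complex.conj_ofReal, div_mul_div_comm, ← Complex.exp_add]
    have h2 : (Real.sqrt 2 : ℂ) * (Real.sqrt 2 : ℂ) = 2 := by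
      rw [← Complex.ofReal_mul, Real.mul_self_sqrt (by norm_num)]; norm_num
    rw [h2]
    norm_num
  have main : ∀ β : ℂ,
      pinner (scL Real.pi φ ε β (hm0 β) (hm1 β)) (scL Real.pi φ ε α (hm0 α) (hm1 α)) =
        (1 - ((‖α - β‖ ^ 2 / 2 : ℝ) : ℂ)) *
          Complex.exp ((-(‖α‖ ^ 2 : ℝ) / 2 : ℝ) + (-(‖β‖ ^ 2 : ℝ) / 2 : ℝ) + conj β * α) := by
    intro β
    simp only [pinner, scL, Real.cos_pi_div_two, Real.sin_pi_div_two, Complex.ofReal_zero,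
      Complex.ofReal_one, zero_smul, zero_add, one_mul]
    rw [inner_smul_left, inner_smul_right, inner_smul_left, inner_smul_right,
      inner0 α β, inner1 α β, map_mul]
    have hab := normsq_cast (α - β)
    simp only [map_sub] at hab
    push_cast at hab ⊢
    linear_combination
      ((1 + conj β * α + β * conj α - α * conj α - β * conj β) *
          Complex.exp (-(‖α‖ : ℂ) ^ 2 / 2 + -(‖β‖ : ℂ) ^ 2 / 2 + conj β * α) +
        conj ε * ε *
          Complex.exp (-(‖α‖ : ℂ) ^ 2 / 2 + -(‖β‖ : ℂ) ^ 2 / 2 + conj β * α)) * hcc +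
      (Complex.exp (-(‖α‖ : ℂ) ^ 2 / 2 + -(‖β‖ : ℂ) ^ 2 / 2 + conj β * α) / 2) * hee +
      (Complex.exp (-(‖α‖ : ℂ) ^ 2 / 2 + -(‖β‖ : ℂ) ^ 2 / 2 + conj β * α) / 2) * hab
  have hiff : ∀ β : ℂ,
      (pinner (scL Real.pi φ ε β (hm0 β) (hm1 β))
          (scL Real.pi φ ε α (hm0 α) (hm1 α)) = 0 ↔ ‖α - β‖ ^ 2 = 2) := by
    intro β
    rw [main β, mul_eq_zero]
    have hne : Complex.exp ((-(‖α‖ ^ 2 : ℝ) / 2 : ℝ) + (-(‖β‖ ^ 2 : ℝ) / 2 : ℝ) + conj β * α)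
        ≠ 0 := Complex.exp_ne_zero _
    constructor
    · rintro (h | h)
      · have h2 : ((‖α - β‖ ^ 2 / 2 : ℝ) : ℂ) = ((1 : ℝ) : ℂ) := by
          rw [Complex.ofReal_one]; linear_combination -h
        have h3 : ‖α - β‖ ^ 2 / 2 = 1 := Complex.ofReal_injective h2
        linarith
      · exact absurd h hne
    · intro h
      left
      rw [h]
      norm_num
  refine ⟨main, hiff, ?_⟩
  ext β
  simp only [Set.mem_setOf_eq, hiff β]
  constructor
  · intro h
    refine ⟨(β - α).arg, ?_⟩
    have hw : ‖β - α‖ = Real.sqrt 2 := by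
      rw [norm_sub_rev, ← h, Real.sqrt_sq (norm_nonneg _)]
    have h2 := Complex.norm_mul_exp_arg_mul_I (β - α)
    rw [hw] at h2
    linear_combination -h2
  · rintro ⟨t, rfl⟩
    have : α - (α + (Real.sqrt 2 : ℂ) * Complex.exp (t * Complex.I))
        = -((Real.sqrt 2 : ℂ) * Complex.exp (t * Complex.I)) := by ring
    rw [this, norm_neg]
    rw [norm_mul]
    have h1 : ‖((Real.sqrt 2 : ℝ) : ℂ)‖ = Real.sqrt 2 := by
      rw [Complex.norm_real, Real.norm_eq_abs, abs_of_nonneg (Real.sqrt_nonneg _)]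
    have h2 : ‖Complex.exp (t * Complex.I)‖ = 1 := by
      rw [Complex.norm_exp_ofReal_mul_I]
    rw [h1, h2, mul_one, Real.sq_sqrt (by norm_num)]

end
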